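/- Let A be Hurwitz, B ∈ ℝ^{n×m}. The frequency-limited controllability Gramian P_Ω = (1/(2π)) ∫_{-ω}^{ω} (jν I − A)^{-1} B Bᵀ (jν I − A)^{-*} dν satisfies A P_Ω + P_Ω Aᵀ + F_Ω B Bᵀ + B Bᵀ F_Ω^* = 0, where F_Ω = (1/(2π)) ∫_{-ω}^{ω} (jν I − A)^{-1} dν. -/

import Mathlib

open Matrix MeasureTheory

/-- A real square matrix is Hurwitz if all its (complex) eigenvalues have negative real part. -/
def IsHurwitz {n : ℕ} (A : Matrix (Fin n) (Fin n) ℝ) : Prop :=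
  ∀ μ ∈ spectrum ℂ (A.map (Complex.ofReal ·)), μ.re < 0

/-- The resolvent-type matrix `jνI - A` for a real matrix `A`, viewed over `ℂ`. -/
noncomputable def resMat {n : ℕ} (A : Matrix (Fin n) (Fin n) ℝ) (ν : ℝ) :
    Matrix (Fin n) (Fin n) ℂ :=
  ((ν : ℂ) * Complex.I) • (1 : Matrix (Fin n) (Fin n) ℂ) - A.map (Complex.ofReal ·)

lemma resMat_det_isUnit {n : ℕ} {A : Matrix (Fin n) (Fin n) ℝ} (hA : IsHurwitz A) (ν : ℝ) :
    IsUnit (resMat A ν).det := by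
  rw [isUnit_iff_ne_zero]
  intro h
  have hmem : ((ν : ℂ) * Complex.I) ∈ spectrum ℂ (A.map (Complex.ofReal ·)) := by
    rw [spectrum.mem_iff]
    intro hu
    rw [Algebra.algebraMap_eq_smul_one, ← resMat, Matrix.isUnit_iff_isUnit_det, h] at hu
    exact (not_isUnit_zero hu : False)
  have := hA _ hmem
  simp at this

lemma continuous_resMat_inv {n : ℕ} {A : Matrix (Fin n) (Fin n) ℝ} (hA : IsHurwitz A) :
    Continuous fun ν : ℝ => (resMat A ν)⁻¹ := by
  have hres : Continuous fun ν : ℝ => resMat A ν := by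
    unfold resMat
    exact ((Complex.continuous_ofReal.mul continuous_const).smul continuous_const).sub
      continuous_const
  have hdet : Continuous fun ν : ℝ => (resMat A ν).det := hres.matrix_det
  have hadj : Continuous fun ν : ℝ => (resMat A ν).adjugate := hres.matrix_adjugate
  have : Continuous fun ν : ℝ => ((resMat A ν).det)⁻¹ • (resMat A ν).adjugate := by
    refine Continuous.smul (hdet.inv₀ fun ν => ?_) hadj
    exact (resMat_det_isUnit hA ν).ne_zero
  convert this using 2 with ν
  rw [Matrix.inv_def, Ring.inverse_eq_inv']

lemma key_identity {n m : ℕ} {A : Matrix (Fin n) (Fin n) ℝ} (hA : IsHurwitz A)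
    (B : Matrix (Fin n) (Fin m) ℝ) (ν : ℝ) :
    A.map (Complex.ofReal ·) *
        ((resMat A ν)⁻¹ * (B.map (Complex.ofReal ·)) * (B.map (Complex.ofReal ·))ᵀ *
          ((resMat A ν)⁻¹)ᴴ)
      + ((resMat A ν)⁻¹ * (B.map (Complex.ofReal ·)) * (B.map (Complex.ofReal ·))ᵀ *
          ((resMat A ν)⁻¹)ᴴ) * (A.map (Complex.ofReal ·))ᵀ
      + (resMat A ν)⁻¹ * ((B.map (Complex.ofReal ·)) * (B.map (Complex.ofReal ·))ᵀ)
      + ((B.map (Complex.ofReal ·)) * (B.map (Complex.ofReal ·))ᵀ) * ((resMat A ν)⁻¹)ᴴ = 0 := by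
  set R := resMat A ν with hR
  set Aℂ := A.map (Complex.ofReal ·) with hAc
  set C := (B.map (Complex.ofReal ·)) * (B.map (Complex.ofReal ·))ᵀ with hC
  have hdet := resMat_det_isUnit hA ν
  have hdetH : IsUnit Rᴴ.det := by
    rw [Matrix.det_conjTranspose]
    exact hdet.star
  have hAeq : Aℂ = ((ν : ℂ) * Complex.I) • (1 : Matrix (Fin n) (Fin n) ℂ) - R := by
    rw [hR]; unfold resMat; exact (sub_sub_cancel _ _).symm
  have hAℂH : Aℂᴴ = Aℂᵀ := by
    ext i j
    simp [hAc, Matrix.conjTranspose_apply, Matrix.transpose_apply, Matrix.map_apply]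
  have hAT : Aℂᵀ = (-((ν : ℂ) * Complex.I)) • (1 : Matrix (Fin n) (Fin n) ℂ) - Rᴴ := by
    ext i j
    simp only [hR, resMat, hAc, Matrix.conjTranspose_apply, Matrix.sub_apply,
      Matrix.smul_apply, Matrix.one_apply, Matrix.map_apply, Matrix.transpose_apply,
      star_sub, star_smul, star_one, smul_eq_mul]
    by_cases h : i = j
    · subst h
      simp [Matrix.one_apply, Complex.conj_I, Complex.conj_ofReal]
    · simp [Matrix.one_apply, h, Ne.symm h, Complex.conj_ofReal]
  have hinvH : (R⁻¹)ᴴ = (Rᴴ)⁻¹ := Matrix.conjTranspose_nonsing_inv R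
  have h1 : Aℂ * (R⁻¹ * C * (R⁻¹)ᴴ) =
      ((ν : ℂ) * Complex.I) • (R⁻¹ * C * (R⁻¹)ᴴ) - C * (R⁻¹)ᴴ := by
    rw [hAeq, Matrix.sub_mul, Matrix.smul_mul, Matrix.one_mul]
    congr 1
    rw [← Matrix.mul_assoc, ← Matrix.mul_assoc, Matrix.mul_nonsing_inv R hdet, Matrix.one_mul]
  have h2 : (R⁻¹ * C * (R⁻¹)ᴴ) * Aℂᵀ =
      (-((ν : ℂ) * Complex.I)) • (R⁻¹ * C * (R⁻¹)ᴴ) - R⁻¹ * C := by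
    rw [hAT, Matrix.mul_sub, Matrix.mul_smul, Matrix.mul_one]
    congr 1
    rw [hinvH, Matrix.mul_assoc (R⁻¹ * C), Matrix.nonsing_inv_mul Rᴴ hdetH, Matrix.mul_one]
  rw [show R⁻¹ * (B.map (Complex.ofReal ·)) * (B.map (Complex.ofReal ·))ᵀ = R⁻¹ * C from
    Matrix.mul_assoc _ _ _, h1, h2, neg_smul]
  abel

lemma intervalIntegral_conj (f : ℝ → ℂ) (a b : ℝ) :
    (∫ ν in a..b, (starRingEnd ℂ) (f ν)) = (starRingEnd ℂ) (∫ ν in a..b, f ν) := by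
  simp [intervalIntegral, ← integral_conj]

theorem frequency_limited_controllability_lyapunov {n m : ℕ}
    (A : Matrix (Fin n) (Fin n) ℝ) (B : Matrix (Fin n) (Fin m) ℝ)
    (hA : IsHurwitz A) (ω : ℝ) (hω : 0 < ω)
    (FΩ PΩ : Matrix (Fin n) (Fin n) ℂ)
    (hFΩ : ∀ i j, FΩ i j = (2 * Real.pi : ℂ)⁻¹ * ∫ ν in (-ω)..ω, (resMat A ν)⁻¹ i j)
    (hPΩ : ∀ i j, PΩ i j = (2 * Real.pi : ℂ)⁻¹ *
      ∫ ν in (-ω)..ω,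
        ((resMat A ν)⁻¹ * (B.map (Complex.ofReal ·)) * (B.map (Complex.ofReal ·))ᵀ *
          ((resMat A ν)⁻¹)ᴴ) i j) :
    A.map (Complex.ofReal ·) * PΩ + PΩ * (A.map (Complex.ofReal ·))ᵀ
      + FΩ * ((B * Bᵀ).map (Complex.ofReal ·))
      + ((B * Bᵀ).map (Complex.ofReal ·)) * FΩᴴ = 0 := by
  set Aℂ := A.map (Complex.ofReal ·) with hAc
  set Bℂ := B.map (Complex.ofReal ·) with hBc
  set c : ℂ := (2 * Real.pi : ℂ)⁻¹ with hc
  have hBBT : (B * Bᵀ).map (Complex.ofReal ·) = Bℂ * Bℂᵀ := by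
    ext i j
    simp [Matrix.map_apply, Matrix.mul_apply, Matrix.transpose_apply, hBc]
  set G : ℝ → Matrix (Fin n) (Fin n) ℂ :=
    fun ν => (resMat A ν)⁻¹ * Bℂ * Bℂᵀ * ((resMat A ν)⁻¹)ᴴ with hG
  have hcont := continuous_resMat_inv hA
  have hcontE : ∀ i j, Continuous fun ν : ℝ => (resMat A ν)⁻¹ i j := fun i j =>
    ((continuous_apply j).comp ((continuous_apply i).comp hcont))
  have hcontG : ∀ i j, Continuous fun ν : ℝ => G ν i j := by
    intro i j
    simp only [hG, Matrix.mul_apply]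
    refine continuous_finset_sum _ fun k _ => Continuous.mul ?_ ?_
    · refine continuous_finset_sum _ fun l _ => Continuous.mul ?_ continuous_const
      exact continuous_finset_sum _ fun p _ => (hcontE i p).mul continuous_const
    · exact Complex.continuous_conj.comp (hcontE j k)
  -- integrability facts
  have hintE : ∀ i j, IntervalIntegrable (fun ν => (resMat A ν)⁻¹ i j) volume (-ω) ω :=
    fun i j => (hcontE i j).intervalIntegrable _ _
  have hintG : ∀ i j, IntervalIntegrable (fun ν => G ν i j) volume (-ω) ω :=
    fun i j => (hcontG i j).intervalIntegrable _ _
  have hcontH : ∀ i j, Continuous fun ν : ℝ => ((resMat A ν)⁻¹)ᴴ i j := by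
    intro i j
    simp only [Matrix.conjTranspose_apply]
    exact Complex.continuous_conj.comp (hcontE j i)
  ext i j
  simp only [Matrix.add_apply, Matrix.zero_apply, Matrix.mul_apply]
  -- rewrite each of the four terms as c * ∫ of an entry
  have t1 : ∑ k, Aℂ i k * PΩ k j = c * ∫ ν in (-ω)..ω, (Aℂ * G ν) i j := by
    have : ∀ k, Aℂ i k * PΩ k j = c * ∫ ν in (-ω)..ω, Aℂ i k * G ν k j := by
      intro k
      rw [hPΩ k j, intervalIntegral.integral_const_mul]
      ring
    rw [Finset.sum_congr rfl fun k _ => this k, ← Finset.mul_sum]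
    congr 1
    rw [← intervalIntegral.integral_finset_sum (f := fun k ν => Aℂ i k * G ν k j) fun k _ =>
      ((continuous_const.mul (hcontG k j)).intervalIntegrable _ _)]
    simp [Matrix.mul_apply]
  have t2 : ∑ k, PΩ i k * Aℂᵀ k j = c * ∫ ν in (-ω)..ω, (G ν * Aℂᵀ) i j := by
    have : ∀ k, PΩ i k * Aℂᵀ k j = c * ∫ ν in (-ω)..ω, G ν i k * Aℂᵀ k j := by
      intro k
      rw [hPΩ i k, intervalIntegral.integral_mul_const]
      ring
    rw [Finset.sum_congr rfl fun k _ => this k, ← Finset.mul_sum]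
    congr 1
    rw [← intervalIntegral.integral_finset_sum (f := fun k ν => G ν i k * Aℂᵀ k j) fun k _ =>
      (((hcontG i k).mul continuous_const).intervalIntegrable _ _)]
    simp [Matrix.mul_apply]
  have t3 : ∑ k, FΩ i k * ((B * Bᵀ).map (Complex.ofReal ·)) k j =
      c * ∫ ν in (-ω)..ω, ((resMat A ν)⁻¹ * (Bℂ * Bℂᵀ)) i j := by
    have : ∀ k, FΩ i k * ((B * Bᵀ).map (Complex.ofReal ·)) k j =
        c * ∫ ν in (-ω)..ω, (resMat A ν)⁻¹ i k * (Bℂ * Bℂᵀ) k j := by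
      intro k
      rw [hFΩ i k, intervalIntegral.integral_mul_const, hBBT]
      ring
    rw [Finset.sum_congr rfl fun k _ => this k, ← Finset.mul_sum]
    congr 1
    rw [← intervalIntegral.integral_finset_sum
      (f := fun k ν => (resMat A ν)⁻¹ i k * (Bℂ * Bℂᵀ) k j) fun k _ =>
      (((hcontE i k).mul continuous_const).intervalIntegrable _ _)]
    simp [Matrix.mul_apply]
  have hFH : ∀ k, FΩᴴ k j = c * ∫ ν in (-ω)..ω, ((resMat A ν)⁻¹)ᴴ k j := by
    intro k
    rw [Matrix.conjTranspose_apply, hFΩ j k]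
    show (starRingEnd ℂ) _ = _
    rw [_root_.map_mul, ← intervalIntegral_conj]
    have hcc : (starRingEnd ℂ) c = c := by
      simp [hc, map_inv₀, _root_.map_mul, map_ofNat, Complex.conj_ofReal]
    rw [hcc]
    congr 1
  have t4 : ∑ k, ((B * Bᵀ).map (Complex.ofReal ·)) i k * FΩᴴ k j =
      c * ∫ ν in (-ω)..ω, ((Bℂ * Bℂᵀ) * ((resMat A ν)⁻¹)ᴴ) i j := by
    have : ∀ k, ((B * Bᵀ).map (Complex.ofReal ·)) i k * FΩᴴ k j =
        c * ∫ ν in (-ω)..ω, (Bℂ * Bℂᵀ) i k * ((resMat A ν)⁻¹)ᴴ k j := by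
      intro k
      rw [hFH k, intervalIntegral.integral_const_mul, hBBT]
      ring
    rw [Finset.sum_congr rfl fun k _ => this k, ← Finset.mul_sum]
    congr 1
    rw [← intervalIntegral.integral_finset_sum
      (f := fun k ν => (Bℂ * Bℂᵀ) i k * ((resMat A ν)⁻¹)ᴴ k j) fun k _ =>
      ((continuous_const.mul (hcontH k j)).intervalIntegrable _ _)]
    simp [Matrix.mul_apply]
  rw [t1, t2, t3, t4, ← mul_add, ← mul_add, ← mul_add]
  have hint1 : IntervalIntegrable (fun ν => (Aℂ * G ν) i j) volume (-ω) ω := by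
    apply Continuous.intervalIntegrable
    simp only [Matrix.mul_apply]
    exact continuous_finset_sum _ fun k _ => continuous_const.mul (hcontG k j)
  have hint2 : IntervalIntegrable (fun ν => (G ν * Aℂᵀ) i j) volume (-ω) ω := by
    apply Continuous.intervalIntegrable
    simp only [Matrix.mul_apply]
    exact continuous_finset_sum _ fun k _ => (hcontG i k).mul continuous_const
  have hint3 : IntervalIntegrable (fun ν => ((resMat A ν)⁻¹ * (Bℂ * Bℂᵀ)) i j)
      volume (-ω) ω := by
    apply Continuous.intervalIntegrable
    simp only [Matrix.mul_apply]
    exact continuous_finset_sum _ fun k _ => (hcontE i k).mul continuous_const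
  have hint4 : IntervalIntegrable (fun ν => ((Bℂ * Bℂᵀ) * ((resMat A ν)⁻¹)ᴴ) i j)
      volume (-ω) ω := by
    apply Continuous.intervalIntegrable
    simp only [Matrix.mul_apply]
    exact continuous_finset_sum _ fun k _ => continuous_const.mul (hcontH k j)
  rw [← intervalIntegral.integral_add hint1 hint2,
    ← intervalIntegral.integral_add (hint1.add hint2) hint3,
    ← intervalIntegral.integral_add ((hint1.add hint2).add hint3) hint4]
  have hzero : ∀ ν : ℝ, (Aℂ * G ν) i j + (G ν * Aℂᵀ) i j
      + ((resMat A ν)⁻¹ * (Bℂ * Bℂᵀ)) i j + ((Bℂ * Bℂᵀ) * ((resMat A ν)⁻¹)ᴴ) i j = 0 := by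
    intro ν
    have := key_identity hA B ν
    have h := congrArg (fun M => M i j) this
    simpa [Matrix.add_apply, hG, hAc, hBc, Matrix.mul_assoc] using h
  simp only [hzero]
  simp
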